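/- For the hard cap model on a measurable set A ⊆ S_{d−1}, the expected code size satisfies α_A^θ(λ) = λ · F_A^θ(λ), where F_A^θ(λ) is the expected free area, i.e., the expected measure of the set of points y ∈ A with ⟨y, x⟩ ≤ cos θ for all x in the random configuration. -/

import Mathlib

/-! Since `Ẑ(k) ≤ μ(A)ᵏ / k!`, the series `Z(λ) = ∑ₖ λᵏ Ẑ(k)` may be differentiated term by term:
`Z′(λ) = ∑ₖ λᵏ (k+1) Ẑ(k+1)`. Integrating out the last point of a `(k+1)`-point configuration by
Fubini leaves the measure of the free area of the first `k` points, so `(k+1) Ẑ(k+1)` is exactly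
the `k`-th coefficient `(1/k!) ∫ s(free area)` of `F(λ) Z(λ)`. Hence `λ Z′ = λ F Z`. -/

open Real MeasureTheory

open scoped Classical in
/-- The canonical partition function `Ẑ_A^θ(k)` of the hard cap model. -/
noncomputable def hardCapZhat (d : ℕ) (μ : Measure (EuclideanSpace ℝ (Fin d)))
    (A : Set (EuclideanSpace ℝ (Fin d))) (θ : ℝ) (k : ℕ) : ℝ :=
  (1 / k.factorial : ℝ) *
    ∫ x : Fin k → EuclideanSpace ℝ (Fin d),
      (if ∀ i j : Fin k, i < j → (inner ℝ (x i) (x j) : ℝ) ≤ Real.cos θ then (1 : ℝ) else 0)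
      ∂(Measure.pi fun _ => μ.restrict A)

/-- The grand canonical partition function `Z_A^θ(λ)`. -/
noncomputable def hardCapZ (d : ℕ) (μ : Measure (EuclideanSpace ℝ (Fin d)))
    (A : Set (EuclideanSpace ℝ (Fin d))) (θ : ℝ) (lam : ℝ) : ℝ :=
  ∑' k : ℕ, lam ^ k * hardCapZhat d μ A θ k

/-- The expected code size `α_A^θ(λ) = λ Z′(λ)/Z(λ)`. -/
noncomputable def hardCapAlpha (d : ℕ) (μ : Measure (EuclideanSpace ℝ (Fin d)))
    (A : Set (EuclideanSpace ℝ (Fin d))) (θ : ℝ) (lam : ℝ) : ℝ :=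
  lam * deriv (hardCapZ d μ A θ) lam / hardCapZ d μ A θ lam

open scoped Classical in
/-- The expected free area `F_A^θ(λ)`: the expectation, over a configuration
`X_A` of the hard cap model, of the measure of the set of `y ∈ A` at angle at
least `θ` from every point of `X_A`. -/
noncomputable def hardCapFreeArea (d : ℕ) (μ : Measure (EuclideanSpace ℝ (Fin d)))
    (A : Set (EuclideanSpace ℝ (Fin d))) (θ : ℝ) (lam : ℝ) : ℝ :=
  (1 / hardCapZ d μ A θ lam) *
    ∑' k : ℕ, lam ^ k * ((1 / k.factorial : ℝ) *
      ∫ x : Fin k → EuclideanSpace ℝ (Fin d),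
        (if ∀ i j : Fin k, i < j → (inner ℝ (x i) (x j) : ℝ) ≤ Real.cos θ then
          ((μ.restrict A) {y | ∀ i : Fin k, (inner ℝ y (x i) : ℝ) ≤ Real.cos θ}).toReal
        else 0)
        ∂(Measure.pi fun _ => μ.restrict A))

lemma summable_nat_mul_pow_mul_pow_div_factorial (R C : ℝ) :
    Summable fun k : ℕ => (k : ℝ) * R ^ (k - 1) * (C ^ k / k.factorial) := by
  rw [← summable_nat_add_iff 1]
  have hshift :
      (fun n : ℕ => ((n + 1 : ℕ) : ℝ) * R ^ (n + 1 - 1) * (C ^ (n + 1) / (n + 1).factorial)) =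
        fun n : ℕ => C * ((R * C) ^ n / n.factorial) := by
    funext n
    rw [Nat.add_sub_cancel, Nat.factorial_succ]
    push_cast
    field_simp
    ring
  rw [hshift]
  exact (Real.summable_pow_div_factorial (R * C)).mul_left C

lemma hasDerivAt_tsum_pow_mul_of_abs_le {a : ℕ → ℝ} {C : ℝ}
    (ha : ∀ k, |a k| ≤ C ^ k / k.factorial) (z : ℝ) :
    HasDerivAt (fun z => ∑' k, z ^ k * a k) (∑' k, z ^ k * ((k + 1) * a (k + 1))) z := by
  set R := |z| + 1
  have hbound : ∀ (k : ℕ) (y : ℝ), |y| ≤ R →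
      ‖(k : ℝ) * y ^ (k - 1) * a k‖ ≤ k * R ^ (k - 1) * (C ^ k / k.factorial) := by
    intro k y hy
    rw [norm_mul, norm_mul, norm_pow, Real.norm_natCast, Real.norm_eq_abs, Real.norm_eq_abs]
    gcongr
    exact ha k
  have hzR : |z| < R := lt_add_one _
  have hderiv := hasDerivAt_tsum_of_isPreconnected (y₀ := 0)
    (summable_nat_mul_pow_mul_pow_div_factorial R C) (Metric.isOpen_ball (x := (0 : ℝ)) (ε := R))
    (convex_ball (0 : ℝ) R).isPreconnected (fun k y _ => (hasDerivAt_pow k y).mul_const (a k))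
    (fun k y hy => hbound k y (by simpa using (mem_ball_zero_iff.1 hy).le))
    (Metric.mem_ball_self (by positivity))
    ((summable_nat_add_iff 1).1 (by simp [summable_zero])) (by simpa using hzR)
  have hsum : Summable fun k : ℕ => (k : ℝ) * z ^ (k - 1) * a k :=
    (summable_nat_mul_pow_mul_pow_div_factorial R C).of_norm_bounded fun k => hbound k z hzR.le
  refine hderiv.congr_deriv ?_
  rw [hsum.tsum_eq_zero_add]
  simp only [Nat.cast_zero, zero_mul, zero_add, Nat.add_sub_cancel, Nat.cast_add, Nat.cast_one]
  exact tsum_congr fun k => by ring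

lemma ite_one_zero_eq_indicator {α : Type*} (p : α → Prop) [DecidablePred p] :
    (fun x => if p x then (1 : ℝ) else 0) = {x | p x}.indicator 1 := by
  ext x
  simp [Set.indicator_apply]

lemma integral_ite_one_zero {α : Type*} [MeasurableSpace α] (μ : Measure α) {p : α → Prop}
    [DecidablePred p] (hp : MeasurableSet {x | p x}) :
    ∫ x, (if p x then (1 : ℝ) else 0) ∂μ = μ.real {x | p x} := by
  rw [ite_one_zero_eq_indicator, integral_indicator_one hp]

lemma integral_pi_fin_succ_eq_integral_integral_snoc {α : Type*} [MeasurableSpace α]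
    (ν : Measure α) [SigmaFinite ν] {k : ℕ} {f : (Fin (k + 1) → α) → ℝ}
    (hf : Integrable f (Measure.pi fun _ => ν)) :
    ∫ x, f x ∂(Measure.pi fun _ => ν) =
      ∫ x, ∫ y, f (Fin.snoc x y) ∂ν ∂(Measure.pi fun _ => ν) := by
  let e := MeasurableEquiv.piFinSuccAbove (fun _ : Fin (k + 1) => α) (Fin.last k)
  have he : MeasurePreserving e.symm (ν.prod (Measure.pi fun _ => ν)) (Measure.pi fun _ => ν) :=
    (measurePreserving_piFinSuccAbove (fun _ => ν) (Fin.last k)).symm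
  have hsnoc : ∀ (x : Fin k → α) y, e.symm (y, x) = Fin.snoc x y := fun x y =>
    Fin.insertNth_last' y x
  have hint : Integrable (fun p => f (e.symm p)) (ν.prod (Measure.pi fun _ => ν)) :=
    (he.integrable_comp_emb e.symm.measurableEmbedding).2 hf
  rw [← he.integral_comp', integral_prod_symm _ hint]
  simp only [hsnoc]

section PairwiseInnerLe

variable {E : Type*} [NormedAddCommGroup E] [InnerProductSpace ℝ E]

-- Reducible, so that `if PairwiseInnerLe c x then …` elaborates with the same `Decidable` instance
-- as the unfolded conditions in the hard cap definitions, and lemmas about it rewrite them.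
abbrev PairwiseInnerLe {k : ℕ} (c : ℝ) (x : Fin k → E) : Prop :=
  ∀ i j : Fin k, i < j → (inner ℝ (x i) (x j) : ℝ) ≤ c

lemma pairwiseInnerLe_snoc {k : ℕ} (c : ℝ) (x : Fin k → E) (y : E) :
    PairwiseInnerLe c (Fin.snoc x y : Fin (k + 1) → E) ↔
      PairwiseInnerLe c x ∧ ∀ i, (inner ℝ y (x i) : ℝ) ≤ c := by
  have hlast : ∀ i : Fin k, ¬ Fin.last k < i.castSucc := fun i =>
    not_lt.2 (Fin.castSucc_lt_last i).le
  simp [PairwiseInnerLe, Fin.forall_fin_succ', Fin.castSucc_lt_last, hlast, forall_and,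
    real_inner_comm]

lemma isClosed_setOf_pairwiseInnerLe (k : ℕ) (c : ℝ) :
    IsClosed {x : Fin k → E | PairwiseInnerLe c x} := by
  simp only [PairwiseInnerLe, Set.ofPred_forall]
  exact isClosed_iInter fun i => isClosed_iInter fun j => isClosed_iInter fun _ =>
    isClosed_le (by fun_prop) continuous_const

variable [MeasurableSpace E] [BorelSpace E] [SecondCountableTopology E]

lemma integral_ite_pairwiseInnerLe_succ (ν : Measure E) [IsFiniteMeasure ν] (k : ℕ) (c : ℝ) :
    ∫ x : Fin (k + 1) → E, (if PairwiseInnerLe c x then (1 : ℝ) else 0) ∂(Measure.pi fun _ => ν) =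
      ∫ x : Fin k → E, (if PairwiseInnerLe c x then
        ν.real {y | ∀ i, (inner ℝ y (x i) : ℝ) ≤ c} else 0) ∂(Measure.pi fun _ => ν) := by
  have hint : Integrable (fun x : Fin (k + 1) → E => if PairwiseInnerLe c x then (1 : ℝ) else 0)
      (Measure.pi fun _ => ν) := by
    rw [ite_one_zero_eq_indicator]
    exact (integrable_const 1).indicator (isClosed_setOf_pairwiseInnerLe (k + 1) c).measurableSet
  rw [integral_pi_fin_succ_eq_integral_integral_snoc ν hint]
  refine integral_congr_ae (.of_forall fun x => ?_)
  by_cases hx : PairwiseInnerLe c x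
  · have hfree : IsClosed {y : E | ∀ i, (inner ℝ y (x i) : ℝ) ≤ c} := by
      simp only [Set.ofPred_forall]
      exact isClosed_iInter fun i => isClosed_le (by fun_prop) continuous_const
    simp only [pairwiseInnerLe_snoc, and_iff_right hx, if_pos hx]
    exact integral_ite_one_zero ν hfree.measurableSet
  · simp only [pairwiseInnerLe_snoc, hx, false_and, if_false, integral_zero]

end PairwiseInnerLe

section HardCap

variable {d : ℕ} (μ : Measure (EuclideanSpace ℝ (Fin d))) (A : Set (EuclideanSpace ℝ (Fin d)))
  (θ : ℝ)

lemma hardCapZhat_eq (k : ℕ) :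
    hardCapZhat d μ A θ k = (Measure.pi fun _ => μ.restrict A).real
      {x : Fin k → EuclideanSpace ℝ (Fin d) | PairwiseInnerLe (cos θ) x} / k.factorial := by
  rw [hardCapZhat, one_div_mul_eq_div]
  congr 1
  exact integral_ite_one_zero _ (isClosed_setOf_pairwiseInnerLe k _).measurableSet

variable [IsFiniteMeasure μ]

lemma abs_hardCapZhat_le (k : ℕ) : |hardCapZhat d μ A θ k| ≤ μ.real A ^ k / k.factorial := by
  rw [hardCapZhat_eq, abs_of_nonneg (by positivity)]
  gcongr
  calc _ ≤ (Measure.pi fun _ => μ.restrict A).real Set.univ := measureReal_mono (Set.subset_univ _)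
    _ = μ.real A ^ k := by simp [measureReal_def, Measure.pi_univ]

lemma hasDerivAt_hardCapZ (lam : ℝ) :
    HasDerivAt (hardCapZ d μ A θ)
      (∑' k : ℕ, lam ^ k * ((k + 1) * hardCapZhat d μ A θ (k + 1))) lam :=
  hasDerivAt_tsum_pow_mul_of_abs_le (abs_hardCapZhat_le μ A θ) lam

lemma hardCapFreeArea_eq (lam : ℝ) :
    hardCapFreeArea d μ A θ lam =
      (∑' k : ℕ, lam ^ k * ((k + 1) * hardCapZhat d μ A θ (k + 1))) / hardCapZ d μ A θ lam := by
  rw [hardCapFreeArea, one_div_mul_eq_div]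
  congr 1
  refine tsum_congr fun k => ?_
  rw [hardCapZhat, integral_ite_pairwiseInnerLe_succ, Nat.factorial_succ]
  simp only [measureReal_def]
  push_cast
  field_simp

end HardCap

theorem hardCapAlpha_eq_lam_mul_freeArea_general (d : ℕ) (θ : ℝ)
    (μ : Measure (EuclideanSpace ℝ (Fin d))) [IsFiniteMeasure μ]
    (A : Set (EuclideanSpace ℝ (Fin d))) (lam : ℝ) :
    hardCapAlpha d μ A θ lam = lam * hardCapFreeArea d μ A θ lam := by
  rw [hardCapAlpha, (hasDerivAt_hardCapZ μ A θ lam).deriv, hardCapFreeArea_eq]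
  ring

/-- `α_A^θ(λ) = λ · F_A^θ(λ)`. -/
theorem hardCapAlpha_eq_lam_mul_freeArea (d : ℕ) (θ : ℝ) (hθ : θ ∈ Set.Ioo 0 (π / 2))
    (μ : Measure (EuclideanSpace ℝ (Fin d))) [IsFiniteMeasure μ]
    (S : Set (EuclideanSpace ℝ (Fin d))) (hS : S = Metric.sphere 0 1)
    (hprob : μ S = 1)
    (A : Set (EuclideanSpace ℝ (Fin d))) (hA : MeasurableSet A) (hAS : A ⊆ S)
    (hApos : 0 < μ A) (lam : ℝ) (hlam : 0 < lam) :
    hardCapAlpha d μ A θ lam = lam * hardCapFreeArea d μ A θ lam :=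
  hardCapAlpha_eq_lam_mul_freeArea_general d θ μ A lam
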